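/- arXiv:1008.1346 — 2 statements merged into one kernel-verified Lean document; each statement's English description precedes it below -/
import Mathlib

section
/- The index is locally constant on the set of Fredholm operators: if T₀ and T₁ are Fredholm operators on H joined by a norm-continuous path T_t, t ∈ [0,1], of Fredholm operators, then Ind(T₀) = Ind(T₁). -/
/-- A bounded operator on a Hilbert space is *Fredholm* if its kernel is finite dimensional,
its range is closed, and its cokernel is finite dimensional. -/
def IsFredholm {H : Type} [NormedAddCommGroup H] [InnerProductSpace ℂ H] [CompleteSpace H]
    (T : H →L[ℂ] H) : Prop :=
  FiniteDimensional ℂ (LinearMap.ker (T : H →ₗ[ℂ] H)) ∧ IsClosed (LinearMap.range (T : H →ₗ[ℂ] H) : Set H) ∧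
    FiniteDimensional ℂ (H ⧸ LinearMap.range (T : H →ₗ[ℂ] H))

/-- The *index* of an operator: `dim ker T − dim coker T` (as an integer). -/
noncomputable def fredholmIndex {H : Type} [NormedAddCommGroup H] [InnerProductSpace ℂ H]
    [CompleteSpace H] (T : H →L[ℂ] H) : ℤ :=
  (Module.finrank ℂ (LinearMap.ker (T : H →ₗ[ℂ] H)) : ℤ) - Module.finrank ℂ (H ⧸ LinearMap.range (T : H →ₗ[ℂ] H))

/-!
Let `T` be Fredholm, `M = (ker T)ᗮ` and `W = (range T)ᗮ`. The operator
`Φ S : M × W → H, (m, w) ↦ S m + w` is invertible for `S = T`, hence for every `S` near `T`,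
since invertible operators form an open set. Whenever `Φ S` is bijective, `S` is injective on `M`
and `W` complements `S(M)`; the induced map `H ⧸ M → H ⧸ S(M)` then has kernel and cokernel
isomorphic to those of `S`, and it acts between finite-dimensional spaces of dimensions
`dim ker T` and `dim W`. So `ind S = ind T` near `T`, and a locally constant function is
constant on the connected interval `[0, 1]`.
-/

open Function Module Topology

namespace LinearMap

variable {R V V' : Type*} [Ring R] [AddCommGroup V] [Module R V] [AddCommGroup V'] [Module R V']

theorem bijective_coprod_comp_subtype_iff {f : V →ₗ[R] V'} {M : Submodule R V}
    {W : Submodule R V'} :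
    Bijective ((f ∘ₗ M.subtype).coprod W.subtype) ↔
      Disjoint (ker f) M ∧ IsCompl (M.map f) W := by
  have hrange : range (f ∘ₗ M.subtype) = M.map f := by rw [range_comp, Submodule.range_subtype]
  rw [Bijective, ← ker_eq_bot, ← range_eq_top, range_coprod, hrange, Submodule.range_subtype,
    ← codisjoint_iff, isCompl_iff, ← and_assoc]
  refine and_congr_left fun _ => ⟨fun h => ⟨?_, ?_⟩, fun ⟨hM, hW⟩ => ?_⟩
  · refine Submodule.disjoint_def.2 fun x hxf hxM => ?_
    have := congr_arg Prod.fst ((ker_eq_bot'.1 h) (⟨x, hxM⟩, 0) (by simpa using hxf))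
    simpa using this
  · refine Submodule.disjoint_def.2 fun y ⟨x, hxM, hxy⟩ hyW => ?_
    have := congr_arg Prod.snd ((ker_eq_bot'.1 h) (⟨x, hxM⟩, -⟨y, hyW⟩) (by simp [hxy]))
    simpa using this
  · rw [ker_coprod_of_disjoint_range _ _ (by rwa [hrange, Submodule.range_subtype]), ker_comp,
      Submodule.disjoint_iff_comap_eq_bot.1 hM.symm, Submodule.ker_subtype, Submodule.prod_bot]

theorem index_mapQ_map {f : V →ₗ[R] V'} {M : Submodule R V} (hM : Disjoint (ker f) M) :
    (M.mapQ (M.map f) f (M.le_comap_map f)).index = f.index := by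
  set g := M.mapQ (M.map f) f (M.le_comap_map f)
  have hinj : Injective (M.mkQ ∘ₗ (ker f).subtype) := by
    rw [← ker_eq_bot, ker_comp, Submodule.ker_mkQ, ← Submodule.disjoint_iff_comap_eq_bot]
    exact hM
  have hker : ker g = range (M.mkQ ∘ₗ (ker f).subtype) := by
    rw [Submodule.ker_mapQ, Submodule.comap_map_eq, range_comp, Submodule.range_subtype,
      Submodule.map_sup, Submodule.mkQ_map_self, bot_sup_eq]
  have hcoker : range g = (range f).map (M.map f).mkQ := Submodule.range_mapQ _ _ _ _
  rw [index_eq_finrank_sub, index_eq_finrank_sub, hker, hcoker,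
    (LinearEquiv.ofInjective _ hinj).finrank_eq.symm,
    (Submodule.quotientQuotientEquivQuotient _ _ map_le_range).finrank_eq]

variable {k : Type*} [DivisionRing k] [Module k V] [Module k V']

theorem index_eq_finrank_quotient_sub {f : V →ₗ[k] V'} {M : Submodule k V}
    (hM : Disjoint (ker f) M) [FiniteDimensional k (V ⧸ M)]
    [FiniteDimensional k (V' ⧸ M.map f)] :
    f.index = finrank k (V ⧸ M) - finrank k (V' ⧸ M.map f) := by
  rw [← index_mapQ_map hM, index_eq_of_finiteDimensional]

theorem index_eq_of_bijective_coprod_comp_subtype {f : V →ₗ[k] V'} {M : Submodule k V}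
    {W : Submodule k V'} [FiniteDimensional k (V ⧸ M)] [FiniteDimensional k W]
    (h : Bijective ((f ∘ₗ M.subtype).coprod W.subtype)) :
    f.index = finrank k (V ⧸ M) - finrank k W := by
  obtain ⟨hM, hW⟩ := bijective_coprod_comp_subtype_iff.1 h
  let e := Submodule.quotientEquivOfIsCompl _ _ hW
  have : FiniteDimensional k (V' ⧸ M.map f) := e.symm.finiteDimensional
  rw [index_eq_finrank_quotient_sub hM, e.finrank_eq]

end LinearMap

theorem ContinuousLinearMap.isOpen_setOf_bijective {𝕜 E F : Type*} [NontriviallyNormedField 𝕜]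
    [NormedAddCommGroup E] [NormedSpace 𝕜 E] [CompleteSpace E]
    [NormedAddCommGroup F] [NormedSpace 𝕜 F] [CompleteSpace F] :
    IsOpen {f : E →L[𝕜] F | Bijective f} := by
  convert ContinuousLinearEquiv.isOpen (𝕜 := 𝕜) (E := E) (F := F) using 1
  ext f
  refine ⟨fun hf => ⟨.ofBijective f (LinearMap.ker_eq_bot.2 hf.1)
    (LinearMap.range_eq_top.2 hf.2), rfl⟩, ?_⟩
  rintro ⟨e, rfl⟩
  exact e.bijective

theorem IsFredholm.eventually_fredholmIndex_eq {H : Type} [NormedAddCommGroup H]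
    [InnerProductSpace ℂ H] [CompleteSpace H] {T : H →L[ℂ] H} (hT : IsFredholm T) :
    ∀ᶠ S in 𝓝 T, fredholmIndex S = fredholmIndex T := by
  obtain ⟨hker, hrange, hcoker⟩ := hT
  have : CompleteSpace (LinearMap.range (T : H →ₗ[ℂ] H)) := hrange.completeSpace_coe
  set M := (LinearMap.ker (T : H →ₗ[ℂ] H))ᗮ
  set W := (LinearMap.range (T : H →ₗ[ℂ] H))ᗮ
  have hKM : IsCompl (LinearMap.ker (T : H →ₗ[ℂ] H)) M := Submodule.isCompl_orthogonal _
  have hRW : IsCompl (LinearMap.range (T : H →ₗ[ℂ] H)) W := Submodule.isCompl_orthogonal _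
  have : FiniteDimensional ℂ (H ⧸ M) :=
    (Submodule.quotientEquivOfIsCompl _ _ hKM.symm).symm.finiteDimensional
  have : FiniteDimensional ℂ W := (Submodule.quotientEquivOfIsCompl _ _ hRW).finiteDimensional
  let Φ (S : H →L[ℂ] H) : M × W →L[ℂ] H := (S ∘L M.subtypeL).coprod W.subtypeL
  have hΦT : Bijective (Φ T) := LinearMap.bijective_coprod_comp_subtype_iff.2
    ⟨hKM.disjoint, by rwa [Submodule.map_eq_range_iff.2 hKM.symm.codisjoint]⟩
  have hΦ : Continuous Φ := by fun_prop
  filter_upwards [hΦ.continuousAt.preimage_mem_nhds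
    (ContinuousLinearMap.isOpen_setOf_bijective.mem_nhds hΦT)] with S hS
  exact (LinearMap.index_eq_of_bijective_coprod_comp_subtype hS).trans
    (LinearMap.index_eq_of_bijective_coprod_comp_subtype hΦT).symm

/-- The index is constant along norm-continuous paths of Fredholm operators: if `T t`,
`t ∈ [0,1]`, is a continuous path of Fredholm operators, then `Ind (T 0) = Ind (T 1)`. -/
theorem fredholmIndex_eq_of_path
    {H : Type} [NormedAddCommGroup H] [InnerProductSpace ℂ H] [CompleteSpace H]
    (T : ℝ → (H →L[ℂ] H)) (hcont : ContinuousOn T (Set.Icc 0 1))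
    (hFred : ∀ t ∈ Set.Icc (0 : ℝ) 1, IsFredholm (T t)) :
    fredholmIndex (T 0) = fredholmIndex (T 1) := by
  have hlocal : IsLocallyConstant fun t : Set.Icc (0 : ℝ) 1 => fredholmIndex (T t) :=
    (IsLocallyConstant.iff_eventually_eq _).2 fun t =>
      hcont.domRestrict.continuousAt.eventually (hFred t t.2).eventually_fredholmIndex_eq
  exact hlocal.apply_eq_of_preconnectedSpace ⟨0, by simp⟩ ⟨1, by simp⟩
end

section
/- For a continuous function f on the circle, the commutator [P, M_f] = P M_f − M_f P of the Hardy projection P with the multiplication operator M_f is a compact operator on L²(S¹). -/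
/-! `M_f` depends linearly on `f` with `‖M_f‖ ≤ ‖f‖_∞`, so `f ↦ [P, M_f]` is a bounded linear map
into the operators on `L²`, and the compact operators form a closed subspace there. Since
trigonometric polynomials are dense in `C(S¹)`, it suffices to treat `f = eₙ`. Multiplication by
`eₙ` shifts the Fourier basis, `eₘ ↦ eₙ₊ₘ`, so `[P, M_{eₙ}] eₘ` vanishes unless `m` and `n + m` lie
on different sides of `0`: `[P, M_{eₙ}]` has range in the span of the `eₖ` with `|k| ≤ |n|`, and
finite rank operators are compact. -/

open MeasureTheory AddCircle

instance : Fact ((0 : ℝ) < 2 * Real.pi) := ⟨by positivity⟩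

/-- The space `L²(S¹)` of square-integrable functions on the circle (of length `2π`),
with respect to its normalized Haar measure. -/
noncomputable abbrev L2Circle : Type :=
  Lp ℂ 2 (@haarAddCircle (2 * Real.pi) _)

/-- The Hardy space `H²(S¹) ⊆ L²(S¹)`: the closed span of the Fourier monomials `zⁿ`, `n ≥ 0`. -/
noncomputable def hardySpace : Submodule ℂ L2Circle :=
  (Submodule.span ℂ (Set.range fun n : ℕ => (fourierLp 2 (n : ℤ) : L2Circle))).topologicalClosure

instance : CompleteSpace hardySpace :=
  (Submodule.isClosed_topologicalClosure _).completeSpace_coe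

/-- The Hardy projection `P : L²(S¹) → L²(S¹)`, i.e. the orthogonal projection onto the Hardy
space. -/
noncomputable def hardyProjection : L2Circle →L[ℂ] L2Circle :=
  hardySpace.subtypeL ∘L Submodule.orthogonalProjectionOnto hardySpace

open scoped ENNReal

namespace ContinuousMap

variable {α 𝕜 : Type*} [TopologicalSpace α] [CompactSpace α] [MeasurableSpace α] [BorelSpace α]
  [NontriviallyNormedField 𝕜] [SecondCountableTopologyEither α 𝕜]
  (μ : Measure α) [IsFiniteMeasure μ] (p : ℝ≥0∞) [Fact (1 ≤ p)]

noncomputable def mulLp : C(α, 𝕜) →L[𝕜] Lp 𝕜 p μ →L[𝕜] Lp 𝕜 p μ :=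
  (ContinuousLinearMap.mul 𝕜 𝕜).holderL μ ∞ p p ∘L toLp ∞ μ 𝕜

variable {μ p} in
theorem coeFn_mulLp (f : C(α, 𝕜)) (g : Lp 𝕜 p μ) :
    mulLp μ p f g =ᵐ[μ] fun x => f x * g x := by
  filter_upwards [(ContinuousLinearMap.mul 𝕜 𝕜).coeFn_holder (r := p) (toLp ∞ μ 𝕜 f) g,
    coeFn_toLp (p := ∞) (𝕜 := 𝕜) μ f] with x hx hf
  rw [mulLp, ContinuousLinearMap.comp_apply, ContinuousLinearMap.holderL_apply_apply, hx, hf]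
  rfl

end ContinuousMap

theorem ContinuousLinearMap.apply_mem_of_closure_span_eq_top {R E F : Type*} [Semiring R]
    [TopologicalSpace E] [AddCommMonoid E] [Module R E] [ContinuousAdd E]
    [ContinuousConstSMul R E] [TopologicalSpace F] [AddCommMonoid F] [Module R F]
    (T : E →L[R] F) {s : Set E} (hs : (Submodule.span R s).topologicalClosure = ⊤)
    {K : Submodule R F} (hK : IsClosed (K : Set F)) (hsK : Set.MapsTo T s K) (x : E) :
    T x ∈ K := by
  have : (Submodule.span R s).topologicalClosure ≤ K.comap (T : E →ₗ[R] F) :=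
    Submodule.topologicalClosure_minimal _ (Submodule.span_le.2 hsK) (hK.preimage T.continuous)
  exact this (hs ▸ Submodule.mem_top)

theorem ContinuousLinearMap.isCompactOperator_of_mapsTo_finiteDimensional {𝕜 E F : Type*}
    [NontriviallyNormedField 𝕜] [ProperSpace 𝕜]
    [TopologicalSpace E] [AddCommMonoid E] [Module 𝕜 E]
    [NormedAddCommGroup F] [NormedSpace 𝕜 F] (T : E →L[𝕜] F) (K : Submodule 𝕜 F)
    [FiniteDimensional 𝕜 K] (hT : ∀ x, T x ∈ K) : IsCompactOperator T :=
  have : ProperSpace K := FiniteDimensional.proper 𝕜 K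
  (isCompactOperator_of_locallyCompactSpace_dom (T.codRestrict K hT)).clm_comp K.subtypeL

theorem Orthonormal.mem_orthogonal_span_image {𝕜 E ι : Type*} [RCLike 𝕜]
    [NormedAddCommGroup E] [InnerProductSpace 𝕜 E] {v : ι → E} (hv : Orthonormal 𝕜 v)
    {s : Set ι} {i : ι} (hi : i ∉ s) : v i ∈ (Submodule.span 𝕜 (v '' s))ᗮ := by
  have : Submodule.span 𝕜 (v '' s) ⟂ 𝕜 ∙ v i := by
    refine Submodule.isOrtho_span.2 ?_
    rintro _ ⟨j, hj, rfl⟩ _ rfl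
    exact hv.2 (ne_of_mem_of_not_mem hj hi)
  exact this.ge (Submodule.mem_span_singleton_self _)

theorem mulLp_fourier_fourierLp {T : ℝ} [Fact (0 < T)] (p : ℝ≥0∞) [Fact (1 ≤ p)] (n m : ℤ) :
    ContinuousMap.mulLp haarAddCircle p (fourier n) (fourierLp p m) =
      (fourierLp p (n + m) : Lp ℂ p (@haarAddCircle T _)) := by
  refine Lp.ext ?_
  filter_upwards [ContinuousMap.coeFn_mulLp (fourier n) (fourierLp p m), coeFn_fourierLp p m,
    coeFn_fourierLp p (n + m)] with x hmul hm hnm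
  rw [hmul, hm, hnm, fourier_add]

theorem hardySpace_eq_topologicalClosure_span_image :
    hardySpace = (Submodule.span ℂ (fourierLp 2 '' Set.Ici 0)).topologicalClosure := by
  rw [hardySpace, ← Nat.range_cast_int, ← Set.range_comp]
  rfl

theorem hardyProjection_fourierLp (m : ℤ) :
    hardyProjection (fourierLp 2 m) = if 0 ≤ m then (fourierLp 2 m : L2Circle) else 0 := by
  change hardySpace.starProjection _ = _
  split_ifs with hm
  · refine Submodule.starProjection_eq_self_iff.2 ?_
    rw [hardySpace_eq_topologicalClosure_span_image]
    exact Submodule.le_topologicalClosure _ (Submodule.subset_span ⟨m, hm, rfl⟩)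
  · rw [Submodule.starProjection_apply_eq_zero_iff, hardySpace_eq_topologicalClosure_span_image,
      Submodule.orthogonal_closure]
    exact orthonormal_fourier.mem_orthogonal_span_image hm

noncomputable def hardyCommutator :
    C(AddCircle (2 * Real.pi), ℂ) →L[ℂ] L2Circle →L[ℂ] L2Circle :=
  (ContinuousLinearMap.mul ℂ _ hardyProjection -
    (ContinuousLinearMap.mul ℂ _).flip hardyProjection) ∘L ContinuousMap.mulLp haarAddCircle 2

theorem hardyCommutator_fourier_fourierLp_mem (n m : ℤ) :
    hardyCommutator (fourier n) (fourierLp 2 m) ∈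
      Submodule.span ℂ (fourierLp 2 '' Set.Icc (-|n|) |n|) := by
  have hT : hardyCommutator (fourier n) (fourierLp 2 m) =
      hardyProjection (fourierLp 2 (n + m)) -
        ContinuousMap.mulLp haarAddCircle 2 (fourier n) (hardyProjection (fourierLp 2 m)) := by
    rw [← mulLp_fourier_fourierLp]
    rfl
  rw [hT, hardyProjection_fourierLp, hardyProjection_fourierLp]
  -- in the two cases that survive, `m` and `n + m` have opposite signs, so `|n + m| ≤ |n|`
  split_ifs with hnm hm <;>
    simp only [map_zero, mulLp_fourier_fourierLp, sub_self, sub_zero, zero_sub,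
      Submodule.zero_mem, Submodule.neg_mem_iff] <;>
    exact Submodule.subset_span ⟨n + m, by constructor <;> cases abs_cases n <;> omega, rfl⟩

theorem isCompactOperator_hardyCommutator_fourier (n : ℤ) :
    IsCompactOperator (hardyCommutator (fourier n)) := by
  let K : Submodule ℂ L2Circle := Submodule.span ℂ (fourierLp 2 '' Set.Icc (-|n|) |n|)
  have : FiniteDimensional ℂ K := FiniteDimensional.span_of_finite ℂ ((Set.finite_Icc _ _).image _)
  refine (hardyCommutator (fourier n)).isCompactOperator_of_mapsTo_finiteDimensional K
    ((hardyCommutator (fourier n)).apply_mem_of_closure_span_eq_top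
      (span_fourierLp_closure_eq_top (by norm_num)) (Submodule.closed_of_finiteDimensional K) ?_)
  rintro _ ⟨m, rfl⟩
  exact hardyCommutator_fourier_fourierLp_mem n m

/-- For a continuous function `f` on the circle, the commutator `[P, M_f] = P M_f − M_f P`
of the Hardy projection `P` with the multiplication operator `M_f` is compact on `L²(S¹)`. -/
theorem commutator_hardyProjection_mul_isCompact
    (f : C(AddCircle (2 * Real.pi), ℂ)) (Mf : L2Circle →L[ℂ] L2Circle)
    (hMf : ∀ g : L2Circle,
      (Mf g : AddCircle (2 * Real.pi) → ℂ) =ᵐ[haarAddCircle] fun x => f x * g x) :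
    IsCompactOperator ⇑(hardyProjection ∘L Mf - Mf ∘L hardyProjection) := by
  obtain rfl : Mf = ContinuousMap.mulLp haarAddCircle 2 f :=
    ContinuousLinearMap.ext fun g => Lp.ext ((hMf g).trans (ContinuousMap.coeFn_mulLp f g).symm)
  refine hardyCommutator.apply_mem_of_closure_span_eq_top span_fourier_closure_eq_top
    (K := compactOperator (RingHom.id ℂ) L2Circle L2Circle)
    isClosed_setOfPred_isCompactOperator ?_ f
  rintro _ ⟨n, rfl⟩
  exact isCompactOperator_hardyCommutator_fourier n
end
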